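/- For all β, λ, y ∈ ℂ and every m ∈ ℕ, one has s^(−)_m(y(y+1)) = ∑_{l=0}^{m} (−1)^l · C(m,l) · (−y)_l · (1+y)_l · (β/2+l+2)_{m−l} · (λ−β/2+l+1)_{m−l}. (This is the terminating hypergeometric representation s^(−)_m(y(y+1)) = (β/2+2)_m (λ−β/2+1)_m · ₃F₂[−m, −y, 1+y; β/2+2, λ−β/2+1; 1] with all denominators cleared; it identifies s^(−)_m as a multiple of a dual Hahn polynomial.) -/
import Mathlib


open Finset

/-- Ascending Pochhammer symbol `(a)_k = ∏_{i=0}^{k-1} (a+i)`. -/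
noncomputable def poch (a : ℂ) (k : ℕ) : ℂ := ∏ i ∈ Finset.range k, (a + i)

/-- `R_k(y;α) = ∏_{l=1}^{k} (y - (α-l)(α-l+1))`. -/
noncomputable def Rpoly (y α : ℂ) (k : ℕ) : ℂ :=
  ∏ l ∈ Finset.range k, (y - (α - (l + 1)) * (α - (l + 1) + 1))

/-- `R^(1)_k(y) = ∑_{j=1}^{k} (β/2-k+j+1)_{2(k-j)} (y - (β/2)(β/2+1)) R_{j-1}(y;k)`. -/
noncomputable def R1 (β y : ℂ) (k : ℕ) : ℂ :=
  ∑ j ∈ Finset.Icc 1 k,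
    poch (β/2 - k + j + 1) (2*(k - j)) * (y - β/2*(β/2+1)) * Rpoly y k (j-1)

/-- `s^(-)_m(y)`. -/
noncomputable def sminus (β lam y : ℂ) (m : ℕ) : ℂ :=
  ∑ k ∈ Finset.range (m+1),
    (m.choose k : ℂ) * poch (β/2 - lam - m) (m-k) * poch (-β/2 - m - 1) (m-k) * Rpoly y 0 k

/-- `s^(+)_m(y)`. -/
noncomputable def splus (β lam y : ℂ) (m : ℕ) : ℂ :=
  ∑ k ∈ Finset.range (m+1),
    (m.choose k : ℂ) * poch (β/2 - lam - m) (m-k) * poch (-β/2 - m + 1) (m-k) * Rpoly y 0 k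

/-- Coefficients `D^(1)_k(m)`. -/
noncomputable def D1 (β lam : ℂ) (m k : ℕ) : ℂ :=
  if k = m then lam - β + 2*m
  else (m.choose k : ℂ) * poch (lam - β/2 + k + 1) (m-k) * poch (β/2 + k + 1) (m-k-1) *
    ((k:ℂ)*(lam+β+2*m) + β/2*(lam-β-2*m))

/-- `s^(1)_m(y) = ∑_{k=0}^m D^(1)_k(m) R^(1)_k(y)`. -/
noncomputable def s1 (β lam y : ℂ) (m : ℕ) : ℂ :=
  ∑ k ∈ Finset.range (m+1), D1 β lam m k * R1 β y k


lemma poch_succ (a : ℂ) (n : ℕ) : poch a (n+1) = poch a n * (a + n) := by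
  simp [poch, Finset.prod_range_succ]

lemma poch_succ' (a : ℂ) (n : ℕ) : poch a (n+1) = a * poch (a+1) n := by
  rw [poch, Finset.prod_range_succ']
  rw [mul_comm]
  simp only [Nat.cast_zero, add_zero]
  congr 1
  apply Finset.prod_congr rfl
  intro i _
  push_cast
  ring

lemma poch_reflect (a : ℂ) (n : ℕ) : poch (-a - n + 1) n = (-1)^n * poch a n := by
  induction n generalizing a with
  | zero => simp [poch]
  | succ n ih =>
    rw [show (-a - ((n+1:ℕ):ℂ) + 1) = -(a+n) by push_cast; ring, poch_succ',
      show (-(a+n) + 1) = -a - n + 1 by ring, ih, poch_succ]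
    push_cast; ring

lemma Rpoly_eq (y : ℂ) (k : ℕ) :
    Rpoly (y*(y+1)) 0 k = (-1)^k * poch (-y) k * poch (1+y) k := by
  rw [show ((-1:ℂ))^k * poch (-y) k * poch (1+y) k
      = ∏ l ∈ Finset.range k, ((y - l) * (y + 1 + l)) by
    rw [show ((-1:ℂ))^k = ∏ _l ∈ Finset.range k, (-1:ℂ) by simp, poch, poch,
      ← Finset.prod_mul_distrib, ← Finset.prod_mul_distrib]
    apply Finset.prod_congr rfl; intro i _; ring]
  apply Finset.prod_congr rfl; intro l _; ring

/-- terminating hypergeometric (dual Hahn) representation of `s^(-)_m`. -/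
theorem sminus_dualHahn (β lam y : ℂ) (m : ℕ) :
    sminus β lam (y*(y+1)) m =
      ∑ l ∈ Finset.range (m+1),
        (-1)^l * (m.choose l : ℂ) * poch (-y) l * poch (1+y) l *
          poch (β/2 + l + 2) (m-l) * poch (lam - β/2 + l + 1) (m-l) := by
  unfold sminus
  apply Finset.sum_congr rfl
  intro k hk
  have hk' : k ≤ m := by simpa [Nat.lt_succ_iff] using Finset.mem_range.mp hk
  have hc : ((m - k : ℕ) : ℂ) = (m : ℂ) - k := by push_cast [Nat.cast_sub hk']; ring
  rw [Rpoly_eq]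
  have h1 : poch (β/2 - lam - m) (m-k) = (-1)^(m-k) * poch (lam - β/2 + k + 1) (m-k) := by
    rw [← poch_reflect (lam - β/2 + k + 1) (m-k), hc]; ring_nf
  have h2 : poch (-β/2 - m - 1) (m-k) = (-1)^(m-k) * poch (β/2 + k + 2) (m-k) := by
    rw [← poch_reflect (β/2 + k + 2) (m-k), hc]; ring_nf
  rw [h1, h2]
  ring_nf
  rw [show ((-1:ℂ))^((m-k)*2) = 1 by rw [mul_comm, pow_mul, neg_one_sq, one_pow]]
  ring
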